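/- Let m ≥ 2, let π be an indecomposable 132-avoiding permutation, and let λ = Λ(π) be the partition given by its Lehmer code. Then π avoids the decreasing pattern m (m−1) … 2 1 if and only if λ has at most m − 2 distinct part sizes. -/
import Mathlib


/-- A permutation `π` of length `n` (as a bijection of `Fin n`, position `i` has value `π i`)
contains the pattern `p` of length `m` if some subsequence of `π` is order-isomorphic to `p`. -/
def Contains {n m : ℕ} (π : Equiv.Perm (Fin n)) (p : Equiv.Perm (Fin m)) : Prop :=
  ∃ f : Fin m → Fin n, StrictMono f ∧ ∀ a b : Fin m, π (f a) < π (f b) ↔ p a < p b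

/-- `π` avoids the pattern `p`. -/
def Avoids {n m : ℕ} (π : Equiv.Perm (Fin n)) (p : Equiv.Perm (Fin m)) : Prop :=
  ¬ Contains π p

/-- The number of inversions of `π`: pairs of positions `i < j` with `π i > π j`. -/
noncomputable def invCount {n : ℕ} (π : Equiv.Perm (Fin n)) : ℕ :=
  Nat.card {ij : Fin n × Fin n // ij.1 < ij.2 ∧ π ij.2 < π ij.1}

/-- The pattern 132. -/
def p132 : Equiv.Perm (Fin 3) := ⟨![0,2,1], ![0,2,1], by decide, by decide⟩

/-- `π` is indecomposable: it is not the direct sum of two nonempty permutations,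
i.e. there is no `0 < d < n` such that the first `d` positions carry the values `0, …, d-1`. -/
def Indecomposable {n : ℕ} (π : Equiv.Perm (Fin n)) : Prop :=
  ¬ ∃ d : ℕ, 0 < d ∧ d < n ∧ ∀ i : Fin n, (i : ℕ) < d → (π i : ℕ) < d

/-- The Lehmer code of `π` at position `i`: the number of positions `j > i` with
`π j < π i`.  For an indecomposable `132`-avoiding permutation the Lehmer code is
weakly decreasing and its nonzero entries form the partition `Λ(π)` of `inv(π)`. -/
noncomputable def lehmer {n : ℕ} (π : Equiv.Perm (Fin n)) (i : Fin n) : ℕ :=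
  Nat.card {j : Fin n // i < j ∧ π j < π i}

/-- The Lehmer code of `π`, extended by zeroes beyond position `n`; for an indecomposable
`132`-avoider this is exactly the partition `λ = Λ(π)` with the convention `λ_i = 0` for
indices `i` beyond the number of parts (indices are 0-based here). -/
noncomputable def lehmerExt {n : ℕ} (π : Equiv.Perm (Fin n)) (i : ℕ) : ℕ :=
  if h : i < n then lehmer π ⟨i, h⟩ else 0

/-- The decreasing pattern `m (m−1) … 2 1` of length `m`. -/
def descPattern (m : ℕ) : Equiv.Perm (Fin m) := Fin.revPerm

section AuxLemmas
open Finset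
variable {n : ℕ}
def Lf (π : Equiv.Perm (Fin n)) (i : Fin n) : Finset (Fin n) :=
  Finset.univ.filter (fun j => i < j ∧ π j < π i)
lemma lehmer_eq_card (π : Equiv.Perm (Fin n)) (i : Fin n) :
    lehmer π i = (Lf π i).card := by
  rw [lehmer, Nat.card_eq_fintype_card, Fintype.card_subtype]; rfl
lemma lemA (π : Equiv.Perm (Fin n)) {i j : Fin n} (hij : i < j) (hp : π j < π i) :
    lehmer π j < lehmer π i := by
  rw [lehmer_eq_card, lehmer_eq_card]
  have hsub : insert j (Lf π j) ⊆ Lf π i := by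
    intro t ht
    rcases Finset.mem_insert.1 ht with rfl | ht
    · simp [Lf, hij, hp]
    · simp only [Lf, Finset.mem_filter, Finset.mem_univ, true_and] at ht ⊢
      exact ⟨hij.trans ht.1, ht.2.trans hp⟩
  have hnot : j ∉ Lf π j := by simp [Lf]
  calc (Lf π j).card < (insert j (Lf π j)).card := by
        rw [Finset.card_insert_of_notMem hnot]; omega
    _ ≤ (Lf π i).card := Finset.card_le_card hsub
lemma no132 {n : ℕ} {π : Equiv.Perm (Fin n)} (h132 : Avoids π p132)
    {a b c : Fin n} (hab : a < b) (hbc : b < c) (h1 : π a < π c) (h2 : π c < π b) : False := by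
  apply h132
  refine ⟨![a,b,c], ?_, ?_⟩
  · intro x y hxy
    fin_cases x <;> fin_cases y <;>
      simp_all [Matrix.cons_val_zero, Matrix.cons_val_one] <;>
      first
        | exact hab | exact hbc | exact hab.trans hbc
  · intro x y
    fin_cases x <;> fin_cases y <;>
      simp [p132, Matrix.cons_val_zero, Matrix.cons_val_one, Equiv.coe_fn_mk] <;>
      first
        | exact h1.trans h2 | exact h1 | exact h2
        | exact (h1.trans h2).le | exact h1.le | exact h2.le

lemma lemEq {π : Equiv.Perm (Fin n)} (h132 : Avoids π p132)
    {i j : Fin n} (hij : i < j) (hp : π i < π j) :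
    Lf π j = Finset.univ.filter (fun s => j < s ∧ π s < π i) := by
  ext s
  simp only [Lf, Finset.mem_filter, Finset.mem_univ, true_and]
  refine and_congr_right fun hjs => ⟨fun hs => ?_, fun hs => hs.trans hp⟩
  rcases lt_trichotomy (π s) (π i) with h | h | h
  · exact h
  · exact absurd (π.injective h) (fun e => lt_asymm hij (e ▸ hjs))
  · exact absurd (no132 h132 hij hjs h hs) (fun x => x)
lemma lemC {π : Equiv.Perm (Fin n)} (h132 : Avoids π p132)
    {i j : Fin n} (hij : i < j) : lehmer π j ≤ lehmer π i := by
  rcases lt_trichotomy (π i) (π j) with h | h | h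
  · rw [lehmer_eq_card, lehmer_eq_card, lemEq h132 hij h]
    apply Finset.card_le_card
    intro s hs
    simp only [Lf, Finset.mem_filter, Finset.mem_univ, true_and] at hs ⊢
    exact ⟨hij.trans hs.1, hs.2⟩
  · exact absurd (π.injective h) (by intro e; subst e; exact lt_irrefl _ hij)
  · exact (lemA π hij h).le
lemma lemB {π : Equiv.Perm (Fin n)} (h132 : Avoids π p132)
    {i j : Fin n} (hij : i < j) (hp : π i < π j) (hl : lehmer π j < lehmer π i) :
    ∃ t : Fin n, i < t ∧ t < j ∧ lehmer π t = lehmer π j := by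
  set M : Finset (Fin n) := Finset.univ.filter (fun t => i < t ∧ t < j ∧ π t < π i) with hM
  have hMne : M.Nonempty := by
    by_contra hne
    rw [Finset.not_nonempty_iff_eq_empty] at hne
    have : Lf π i ⊆ Lf π j := by
      intro s hs
      simp only [Lf, Finset.mem_filter, Finset.mem_univ, true_and] at hs ⊢
      have hsj : j < s := by
        rcases lt_trichotomy s j with h | rfl | h
        · have hsM : s ∈ M := by
            rw [hM]; exact Finset.mem_filter.2 ⟨Finset.mem_univ s, hs.1, h, hs.2⟩
          rw [hne] at hsM; exact absurd hsM (Finset.notMem_empty s)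
        · exact absurd hs.2 (lt_asymm hp)
        · exact h
      exact ⟨hsj, hs.2.trans hp⟩
    have := Finset.card_le_card this
    rw [← lehmer_eq_card, ← lehmer_eq_card] at this
    omega
  obtain ⟨t, htM, htmax⟩ := M.exists_max_image id hMne
  simp only [hM, Finset.mem_filter, Finset.mem_univ, true_and] at htM
  obtain ⟨hit, htj, hti⟩ := htM
  refine ⟨t, hit, htj, ?_⟩
  rw [lehmer_eq_card, lehmer_eq_card]
  congr 1
  ext s
  simp only [Lf, Finset.mem_filter, Finset.mem_univ, true_and]
  constructor
  · rintro ⟨hts, hst⟩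
    have hsi : π s < π i := hst.trans hti
    have hsj : j < s := by
      rcases lt_trichotomy s j with h | rfl | h
      · have : s ∈ M := Finset.mem_filter.2 ⟨Finset.mem_univ s, hit.trans hts, h, hsi⟩
        exact absurd (htmax s this) (not_le.2 hts)
      · exact absurd hsi (lt_asymm hp)
      · exact h
    exact ⟨hsj, hsi.trans hp⟩
  · rintro ⟨hjs, hsj⟩
    have hsi : π s < π i := by
      rcases lt_trichotomy (π s) (π i) with h | h | h
      · exact h
      · exact absurd (π.injective h) (fun e => lt_asymm hij (e ▸ hjs))
      · exact absurd (no132 h132 hij hjs h hsj) (fun x => x)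
    have hst : π s < π t := by
      rcases lt_trichotomy (π s) (π t) with h | h | h
      · exact h
      · exact absurd (π.injective h) (fun e => lt_asymm htj (e ▸ hjs))
      · exact absurd (no132 h132 htj hjs h hsj) (fun x => x)
    exact ⟨htj.trans hjs, hst⟩

noncomputable def minpos (π : Equiv.Perm (Fin n)) (v : ℕ) (h : ∃ i : Fin n, lehmer π i = v) :
    Fin n :=
  (Finset.univ.filter (fun i => lehmer π i = v)).min'
    (by obtain ⟨i, hi⟩ := h; exact ⟨i, by simp [hi]⟩)

lemma minpos_lehmer (π : Equiv.Perm (Fin n)) (v : ℕ) (h : ∃ i : Fin n, lehmer π i = v) :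
    lehmer π (minpos π v h) = v := by
  have := Finset.min'_mem (Finset.univ.filter (fun i => lehmer π i = v))
    (by obtain ⟨i, hi⟩ := h; exact ⟨i, by simp [hi]⟩)
  simpa [minpos] using (Finset.mem_filter.1 this).2

lemma minpos_le (π : Equiv.Perm (Fin n)) (v : ℕ) (h : ∃ i : Fin n, lehmer π i = v)
    {t : Fin n} (ht : lehmer π t = v) : minpos π v h ≤ t :=
  Finset.min'_le _ _ (by simp [ht])

lemma lemD {π : Equiv.Perm (Fin n)} (h132 : Avoids π p132) {v w : ℕ}
    (hv : ∃ i : Fin n, lehmer π i = v) (hw : ∃ i : Fin n, lehmer π i = w) (hwv : w < v) :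
    minpos π v hv < minpos π w hw ∧ π (minpos π w hw) < π (minpos π v hv) := by
  set i := minpos π v hv with hi
  set j := minpos π w hw with hj
  have hli : lehmer π i = v := minpos_lehmer π v hv
  have hlj : lehmer π j = w := minpos_lehmer π w hw
  have hij : i < j := by
    rcases lt_trichotomy i j with h | h | h
    · exact h
    · exact absurd (h ▸ hli) (by rw [hlj]; omega)
    · have := lemC h132 h; omega
  refine ⟨hij, ?_⟩
  rcases lt_trichotomy (π j) (π i) with h | h | h
  · exact h
  · exact absurd (π.injective h) (fun e => lt_irrefl i (e ▸ hij))
  · obtain ⟨t, hit, htj, hlt⟩ := lemB h132 hij h (by omega)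
    have := minpos_le π w hw (hlt.trans hlj)
    rw [← hj] at this
    exact absurd (this.trans_lt htj) (lt_irrefl j)


lemma contains_card {m : ℕ} (hm : 2 ≤ m) {π : Equiv.Perm (Fin n)}
    (hc : Contains π (descPattern m)) :
    m - 1 ≤ {v : ℕ | 0 < v ∧ ∃ i : Fin n, lehmer π i = v}.ncard := by
  set S := {v : ℕ | 0 < v ∧ ∃ i : Fin n, lehmer π i = v} with hS
  have hSfin : S.Finite :=
    Set.Finite.subset (Set.finite_range (lehmer π)) (fun v hv => hv.2)
  obtain ⟨f, hf, hiff⟩ := hc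
  have hanti : ∀ a b : Fin m, a < b → π (f b) < π (f a) := by
    intro a b h
    exact (hiff b a).2 (by simp [descPattern, Fin.revPerm_apply, Fin.rev_lt_rev, h])
  have hlt : ∀ a b : Fin m, a < b → lehmer π (f b) < lehmer π (f a) :=
    fun a b h => lemA π (hf h) (hanti a b h)
  have hmle : m - 1 ≤ m := by omega
  have heanti : StrictAnti (fun a : Fin (m - 1) => lehmer π (f (Fin.castLE hmle a))) := by
    intro a b hab
    refine hlt _ _ ?_
    rw [Fin.lt_def, Fin.coe_castLE, Fin.coe_castLE]
    exact hab
  have hemem : ∀ a : Fin (m - 1), lehmer π (f (Fin.castLE hmle a)) ∈ S := by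
    intro a
    refine ⟨?_, ⟨_, rfl⟩⟩
    have hlast : Fin.castLE hmle a < (⟨m - 1, by omega⟩ : Fin m) := by
      rw [Fin.lt_def, Fin.coe_castLE]
      exact a.isLt
    have := hlt _ _ hlast
    omega
  set e : Fin (m - 1) → ℕ := fun a => lehmer π (f (Fin.castLE hmle a)) with he
  have hsub : Finset.image e Finset.univ ⊆ hSfin.toFinset := by
    intro v hv
    rw [Set.Finite.mem_toFinset]
    obtain ⟨a, _, rfl⟩ := Finset.mem_image.1 hv
    exact hemem a
  have hcard := Finset.card_le_card hsub
  rw [Finset.card_image_of_injective _ heanti.injective, Finset.card_univ,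
    Fintype.card_fin] at hcard
  rwa [Set.ncard_eq_toFinset_card S hSfin]

lemma card_contains {m : ℕ} (hm : 2 ≤ m) {π : Equiv.Perm (Fin n)} (h132 : Avoids π p132)
    (hc : m - 1 ≤ {v : ℕ | 0 < v ∧ ∃ i : Fin n, lehmer π i = v}.ncard) :
    Contains π (descPattern m) := by
  set S := {v : ℕ | 0 < v ∧ ∃ i : Fin n, lehmer π i = v} with hS
  have hSfin : S.Finite :=
    Set.Finite.subset (Set.finite_range (lehmer π)) (fun v hv => hv.2)
  set s := hSfin.toFinset with hs
  have hcard : m - 1 ≤ s.card := by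
    rwa [Set.ncard_eq_toFinset_card S hSfin] at hc
  set eo := s.orderIsoOfFin rfl with heo
  set g : Fin (m - 1) → ℕ := fun a => (eo ⟨s.card - 1 - (a : ℕ), by omega⟩ : ℕ) with hg
  have hgmem : ∀ a, g a ∈ S := by
    intro a
    have := (eo ⟨s.card - 1 - (a : ℕ), by omega⟩).2
    rwa [← Set.Finite.mem_toFinset hSfin]
  have hganti : StrictAnti g := by
    intro a b hab
    have h1 : (b : ℕ) < m - 1 := b.isLt
    have : (⟨s.card - 1 - (b : ℕ), by omega⟩ : Fin s.card) <
        ⟨s.card - 1 - (a : ℕ), by omega⟩ := by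
      simp only [Fin.lt_def]
      have := Fin.lt_def.1 hab
      omega
    exact eo.strictMono this
  have hex : ∀ a, ∃ i : Fin n, lehmer π i = g a := fun a => (hgmem a).2
  set pos : Fin (m - 1) → Fin n := fun a => minpos π (g a) (hex a) with hpos
  have hposmono : StrictMono pos := fun a b h => (lemD h132 (hex a) (hex b) (hganti h)).1
  have hpanti : ∀ a b : Fin (m - 1), a < b → π (pos b) < π (pos a) :=
    fun a b h => (lemD h132 (hex a) (hex b) (hganti h)).2
  set last : Fin (m - 1) := ⟨m - 2, by omega⟩ with hlast
  have hlpos : 0 < lehmer π (pos last) := by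
    rw [hpos]; rw [minpos_lehmer]
    exact (hgmem last).1
  obtain ⟨j, hjgt, hjlt⟩ : ∃ j : Fin n, pos last < j ∧ π j < π (pos last) := by
    rw [lehmer_eq_card] at hlpos
    obtain ⟨j, hj⟩ := Finset.card_pos.1 hlpos
    simp only [Lf, Finset.mem_filter, Finset.mem_univ, true_and] at hj
    exact ⟨j, hj.1, hj.2⟩
  set F : Fin m → Fin n := fun a => if h : (a : ℕ) < m - 1 then pos ⟨a, h⟩ else j with hF
  have hFanti : ∀ a b : Fin m, a < b → π (F b) < π (F a) := by
    intro a b hab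
    have hab' : (a : ℕ) < (b : ℕ) := Fin.lt_def.1 hab
    by_cases ha : (a : ℕ) < m - 1
    · by_cases hb : (b : ℕ) < m - 1
      · rw [hF]; simp only [dif_pos ha, dif_pos hb]
        exact hpanti _ _ (Fin.mk_lt_mk.2 hab')
      · rw [hF]; simp only [dif_pos ha, dif_neg hb]
        rcases eq_or_lt_of_le (show (⟨a, ha⟩ : Fin (m - 1)) ≤ last by
          rw [hlast]; exact Fin.mk_le_mk.2 (by omega)) with h | h
        · rw [h]; exact hjlt
        · exact hjlt.trans (hpanti _ _ h)
    · exact absurd hab' (by have := b.isLt; omega)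
  have hFmono : StrictMono F := by
    intro a b hab
    have hab' : (a : ℕ) < (b : ℕ) := Fin.lt_def.1 hab
    by_cases ha : (a : ℕ) < m - 1
    · by_cases hb : (b : ℕ) < m - 1
      · rw [hF]; simp only [dif_pos ha, dif_pos hb]
        exact hposmono (Fin.mk_lt_mk.2 hab')
      · rw [hF]; simp only [dif_pos ha, dif_neg hb]
        rcases eq_or_lt_of_le (show (⟨a, ha⟩ : Fin (m - 1)) ≤ last by
          rw [hlast]; exact Fin.mk_le_mk.2 (by omega)) with h | h
        · rw [h]; exact hjgt
        · exact (hposmono h).trans hjgt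
    · exact absurd hab' (by have := b.isLt; omega)
  refine ⟨F, hFmono, ?_⟩
  intro a b
  rw [show descPattern m a = Fin.rev a from rfl, show descPattern m b = Fin.rev b from rfl,
    Fin.rev_lt_rev]
  constructor
  · intro h
    rcases lt_trichotomy a b with hab | rfl | hab
    · exact absurd (hFanti a b hab) (lt_asymm h)
    · exact absurd h (lt_irrefl _)
    · exact hab
  · exact fun h => hFanti b a h

end AuxLemmas

/-- Let `m ≥ 2` and let `π` be an indecomposable 132-avoiding permutation with partition
`λ = Λ(π)` given by its Lehmer code (the parts of `λ` are the positive values of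
`lehmer π`).  Then `π` avoids the decreasing pattern of length `m` if and only if `λ` has
at most `m − 2` distinct part sizes. -/
theorem avoids_desc_iff (m n : ℕ) (hm : 2 ≤ m) (π : Equiv.Perm (Fin n))
    (hind : Indecomposable π) (h132 : Avoids π p132) :
    Avoids π (descPattern m) ↔
      {v : ℕ | 0 < v ∧ ∃ i : Fin n, lehmer π i = v}.ncard ≤ m - 2 := by
  constructor
  · intro hav
    by_contra h
    push_neg at h
    exact hav (card_contains hm h132 (by omega))
  · intro hle hc
    have := contains_card hm hc
    omega
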